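/- arXiv:1812.01935 — 3 statements merged into one kernel-verified Lean document; each statement's English description precedes it below -/
import Mathlib

section
/- Suppose a_τ = 0. Then aᵀg > 0, the function ρ is strictly increasing on the open interval (−∞, τ_m) and strictly decreasing on (τ_m, +∞). -/
open scoped RealInnerProductSpace

/-!
When `a_τ = 0` we have `aᵀBa = ‖a‖² · aᵀg`; since `B` is positive definite the left side is
positive, so `c := aᵀg > 0`. Writing `s = ‖a‖²`, the two terms of `ρ` then combine to
`ρ τ = c / (2 s) · ((1 - τ s)⁻² - 1)`, and `(1 - τ s)⁻²` increases up to the pole `τ = 1 / s`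
and decreases after it.
-/
theorem Matrix.PosDef.inner_toEuclideanLin_pos {ι : Type*} [Fintype ι] [DecidableEq ι]
    {B : Matrix ι ι ℝ} (hB : B.PosDef) {x : EuclideanSpace ℝ ι} (hx : x ≠ 0) :
    0 < ⟪x, B.toEuclideanLin x⟫ := by
  have h := hB.re_dotProduct_pos (x := WithLp.equiv 2 _ x) (by simpa using hx)
  simpa [EuclideanSpace.inner_eq_star_dotProduct, dotProduct_comm (B.mulVec _)] using h

theorem div_one_sub_add_sq_div_one_sub_sq {s c τ : ℝ} (hs : s ≠ 0) (hτ : 1 - τ * s ≠ 0) :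
    τ * c / (1 - τ * s) + τ ^ 2 * (s * c) / (2 * (1 - τ * s) ^ 2)
      = c / (2 * s) * (((1 - τ * s) ^ 2)⁻¹ - 1) := by
  field_simp
  ring

theorem strictMonoOn_inv_sq_one_sub_mul {s : ℝ} (hs : 0 < s) :
    StrictMonoOn (fun τ ↦ ((1 - τ * s) ^ 2)⁻¹) (Set.Iio (1 / s)) := by
  intro x hx y hy hxy
  have hy' : 0 < 1 - y * s := by linarith [(lt_div_iff₀ hs).1 hy]
  have : 1 - y * s < 1 - x * s := by nlinarith
  dsimp only
  gcongr

theorem strictAntiOn_inv_sq_one_sub_mul {s : ℝ} (hs : 0 < s) :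
    StrictAntiOn (fun τ ↦ ((1 - τ * s) ^ 2)⁻¹) (Set.Ioi (1 / s)) := by
  intro x hx y hy hxy
  have hx' : 0 < x * s - 1 := by linarith [(div_lt_iff₀ hs).1 hx]
  have : x * s - 1 < y * s - 1 := by nlinarith
  dsimp only
  rw [← neg_sq (1 - x * s), ← neg_sq (1 - y * s), neg_sub, neg_sub]
  gcongr

theorem stmt_1 {{n : ℕ}} (hn : 1 ≤ n)
    (a g : EuclideanSpace ℝ (Fin n)) (ha : a ≠ 0)
    (B : Matrix (Fin n) (Fin n) ℝ) (hBs : B.IsSymm) (hBpd : B.PosDef)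
    (ρ : ℝ → ℝ)
    (hρ : ∀ τ : ℝ, τ ≠ 1 / ‖a‖ ^ 2 →
      ρ τ = τ * ⟪a, g⟫ / (1 - τ * ‖a‖ ^ 2)
        + τ ^ 2 * ⟪a, Matrix.toEuclideanLin B a⟫ / (2 * (1 - τ * ‖a‖ ^ 2) ^ 2))
    (aτ τm : ℝ)
    (haτ : aτ = ⟪a, Matrix.toEuclideanLin B a⟫ - ‖a‖ ^ 2 * ⟪a, g⟫)
    (hτm : τm = 1 / ‖a‖ ^ 2)
    (haτ0 : aτ = 0) :
    0 < ⟪a, g⟫ ∧ StrictMonoOn ρ (Set.Iio τm) ∧ StrictAntiOn ρ (Set.Ioi τm) := by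
  set s := ‖a‖ ^ 2
  set c := ⟪a, g⟫
  have hs : 0 < s := by positivity
  have hquad : ⟪a, B.toEuclideanLin a⟫ = s * c := by linarith
  have hc : 0 < c := pos_of_mul_pos_right (hquad ▸ hBpd.inner_toEuclideanLin_pos ha) hs.le
  subst hτm
  have hρ_eq : ∀ τ, τ ≠ 1 / s → ρ τ = c / (2 * s) * (((1 - τ * s) ^ 2)⁻¹ - 1) := fun τ hτ ↦ by
    have hτs : 1 - τ * s ≠ 0 := sub_ne_zero.2 fun h ↦ hτ ((eq_div_iff hs.ne').2 h.symm)
    rw [hρ τ hτ, hquad, div_one_sub_add_sq_div_one_sub_sq hs.ne' hτs]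
  refine ⟨hc, fun x hx y hy hxy ↦ ?_, fun x hx y hy hxy ↦ ?_⟩
  · rw [hρ_eq x hx.ne, hρ_eq y hy.ne]
    gcongr ?_ * (?_ - 1)
    exact strictMonoOn_inv_sq_one_sub_mul hs hx hy hxy
  · rw [hρ_eq x hx.ne', hρ_eq y hy.ne']
    gcongr ?_ * (?_ - 1)
    exact strictAntiOn_inv_sq_one_sub_mul hs hx hy hxy
end

section
/- Assume aᵀg ≠ 0 and |1 − Δ‖a‖| < ε₀. Define τ* = −τ_Δ if a_τ ≤ 0; τ* = max{−τ_Δ, τ_cp} if a_τ > 0 and aᵀg > 0; τ* = min{τ_cp, τ_d} if a_τ > 0 and aᵀg < 0. Then τ* ∈ [−τ_Δ, τ_d] and ρ(τ*) ≤ ρ(τ) for every τ ∈ [−τ_Δ, τ_d]. -/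
/-!
With `s = ‖a‖²`, `p = aᵀg` and `b = aᵀBa > 0`, the substitution `u = τ / (1 - τ s)` turns `ρ` into
the convex quadratic `p u + b u² / 2`, with vertex `u = -p / b`, and `u` is increasing on
`τ < 1 / s`, a half-line containing `[-τ_Δ, τ_d]`. Hence `ρ` is minimized on the interval at the
point whose `u` is closest to the vertex. If `a_τ > 0` the vertex is attained at `τ = τ_cp`, and
`τ*` is `τ_cp` clamped to the interval; if `a_τ ≤ 0` then `-p / b ≤ -1 / s < u(τ)` for every
admissible `τ`, so the left endpoint wins.
-/

open scoped RealInnerProductSpace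

open Set

section IsMinOnComp

variable {α β γ : Type*} [Preorder α] [Preorder β] [Preorder γ] {φ : α → β} {q : β → γ}
  {s : Set α} {l r : α}

theorem MonotoneOn.isMinOn_comp_of_isLeast (hφ : MonotoneOn φ s) (hl : IsLeast s l)
    (hq : MonotoneOn q (Ici (φ l))) : IsMinOn (q ∘ φ) s l := fun τ hτ =>
  have hφτ : φ l ≤ φ τ := hφ hl.1 hτ (hl.2 hτ)
  hq self_mem_Ici hφτ hφτ

theorem MonotoneOn.isMinOn_comp_of_isGreatest (hφ : MonotoneOn φ s) (hr : IsGreatest s r)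
    (hq : AntitoneOn q (Iic (φ r))) : IsMinOn (q ∘ φ) s r := fun τ hτ =>
  have hφτ : φ τ ≤ φ r := hφ hτ hr.1 (hr.2 hτ)
  hq hφτ self_mem_Iic hφτ

end IsMinOnComp

noncomputable def rescale (s τ : ℝ) : ℝ := τ / (1 - τ * s)

noncomputable def quadModel (p b u : ℝ) : ℝ := p * u + b / 2 * u ^ 2

section Rescale

variable {s p c τ : ℝ}

theorem one_sub_mul_pos_of_lt_one_div (hs : 0 < s) (hτ : τ < 1 / s) : 0 < 1 - τ * s := by
  rw [lt_div_iff₀ hs] at hτ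
  linarith

theorem rescale_monotoneOn (hs : 0 < s) : MonotoneOn (rescale s) (Iio (1 / s)) := by
  intro τ₁ hτ₁ τ₂ hτ₂ h
  have hd₁ := one_sub_mul_pos_of_lt_one_div hs hτ₁
  have hd₂ := one_sub_mul_pos_of_lt_one_div hs hτ₂
  rw [rescale, rescale, div_le_div_iff₀ hd₁ hd₂]
  linarith

theorem neg_one_div_lt_rescale (hs : 0 < s) (hτ : τ < 1 / s) : -(1 / s) < rescale s τ := by
  have hd := one_sub_mul_pos_of_lt_one_div hs hτ
  have : rescale s τ + 1 / s = 1 / (s * (1 - τ * s)) := by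
    rw [rescale]
    field_simp
    ring
  have : 0 < 1 / (s * (1 - τ * s)) := by positivity
  linarith

theorem rescale_neg_div (hc : c ≠ 0) : rescale s (-p / c) = -p / (c + s * p) := by
  have hd : 1 - -p / c * s = (c + s * p) / c := by
    field_simp
    ring
  rw [rescale, hd, div_div_div_cancel_right₀ hc]

theorem neg_div_lt_one_div (hs : 0 < s) (hc : 0 < c) (hb : 0 < c + s * p) : -p / c < 1 / s := by
  rw [div_lt_div_iff₀ hc hs]
  linarith

theorem quadModel_rescale (s p b τ : ℝ) :
    quadModel p b (rescale s τ) = τ * p / (1 - τ * s) + τ ^ 2 * b / (2 * (1 - τ * s) ^ 2) := by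
  rw [quadModel, rescale]
  generalize 1 - τ * s = d
  ring

end Rescale

section QuadModel

variable {p b : ℝ}

theorem quadModel_monotoneOn (hb : 0 < b) : MonotoneOn (quadModel p b) (Ici (-p / b)) := by
  intro u hu v hv h
  rw [mem_Ici, div_le_iff₀ hb] at hu hv
  simp only [quadModel]
  nlinarith

theorem quadModel_antitoneOn (hb : 0 < b) : AntitoneOn (quadModel p b) (Iic (-p / b)) := by
  intro u hu v hv h
  rw [mem_Iic, le_div_iff₀ hb] at hu hv
  simp only [quadModel]
  nlinarith

theorem quadModel_isMinOn (hb : 0 < b) : IsMinOn (quadModel p b) univ (-p / b) :=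
  isMinOn_univ_of_anti_mono (quadModel_antitoneOn hb) (quadModel_monotoneOn hb)

end QuadModel

section ClampedMinimizer

variable {s p b l r t₀ : ℝ}

theorem neg_div_lt_rescale (hs : 0 < s) (hb : 0 < b) (hbp : b ≤ s * p) {τ : ℝ}
    (hτ : τ < 1 / s) : -p / b < rescale s τ := by
  have : -p / b ≤ -(1 / s) := by
    rw [neg_div, neg_le_neg_iff, div_le_div_iff₀ hs hb]
    linarith
  linarith [neg_one_div_lt_rescale hs hτ]

theorem isMinOn_quadModel_rescale_left (hs : 0 < s) (hb : 0 < b)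
    (hvertex : -p / b ≤ rescale s l) (hlr : l ≤ r) (hr : r < 1 / s) :
    IsMinOn (quadModel p b ∘ rescale s) (Icc l r) l :=
  have hmono := (rescale_monotoneOn hs).mono (Icc_subset_Iic_self.trans (Iic_subset_Iio.2 hr))
  hmono.isMinOn_comp_of_isLeast (isLeast_Icc hlr)
    ((quadModel_monotoneOn hb).mono (Ici_subset_Ici.2 hvertex))

theorem isMinOn_quadModel_rescale_right (hs : 0 < s) (hb : 0 < b)
    (hvertex : rescale s r ≤ -p / b) (hlr : l ≤ r) (hr : r < 1 / s) :
    IsMinOn (quadModel p b ∘ rescale s) (Icc l r) r :=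
  have hmono := (rescale_monotoneOn hs).mono (Icc_subset_Iic_self.trans (Iic_subset_Iio.2 hr))
  hmono.isMinOn_comp_of_isGreatest (isGreatest_Icc hlr)
    ((quadModel_antitoneOn hb).mono (Iic_subset_Iic.2 hvertex))

theorem isMinOn_quadModel_rescale_max (hs : 0 < s) (hb : 0 < b)
    (ht₀ : rescale s t₀ = -p / b) (hlr : l ≤ r) (hr : r < 1 / s) :
    IsMinOn (quadModel p b ∘ rescale s) (Icc l r) (max l t₀) := by
  rcases le_total t₀ l with ht₀l | hlt₀
  · have hl : l < 1 / s := hlr.trans_lt hr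
    rw [max_eq_left ht₀l]
    exact isMinOn_quadModel_rescale_left hs hb
      (ht₀ ▸ rescale_monotoneOn hs (ht₀l.trans_lt hl) hl ht₀l) hlr hr
  · rw [max_eq_right hlt₀]
    exact (quadModel_isMinOn hb).comp_mapsTo (mapsTo_univ _ _) ht₀

theorem isMinOn_quadModel_rescale_min (hs : 0 < s) (hb : 0 < b)
    (ht₀ : rescale s t₀ = -p / b) (ht₀s : t₀ < 1 / s) (hlr : l ≤ r) (hr : r < 1 / s) :
    IsMinOn (quadModel p b ∘ rescale s) (Icc l r) (min t₀ r) := by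
  rcases le_total t₀ r with ht₀r | hrt₀
  · rw [min_eq_left ht₀r]
    exact (quadModel_isMinOn hb).comp_mapsTo (mapsTo_univ _ _) ht₀
  · rw [min_eq_right hrt₀]
    exact isMinOn_quadModel_rescale_right hs hb (ht₀ ▸ rescale_monotoneOn hs hr ht₀s hrt₀) hlr hr

end ClampedMinimizer

theorem Matrix.PosDef.inner_toEuclideanLin_self_pos {n : Type*} [Fintype n] [DecidableEq n]
    {B : Matrix n n ℝ} (hB : B.PosDef) {a : EuclideanSpace ℝ n} (ha : a ≠ 0) :
    0 < ⟪a, Matrix.toEuclideanLin B a⟫ := by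
  rw [EuclideanSpace.inner_eq_star_dotProduct]
  simpa [dotProduct_comm] using hB.dotProduct_mulVec_pos (x := WithLp.ofLp a) (by simpa using ha)

theorem stmt_5 {{n : ℕ}} (hn : 1 ≤ n)
    (a g : EuclideanSpace ℝ (Fin n)) (ha : a ≠ 0)
    (B : Matrix (Fin n) (Fin n) ℝ) (hBs : B.IsSymm) (hBpd : B.PosDef)
    (ρ : ℝ → ℝ)
    (hρ : ∀ τ : ℝ, τ ≠ 1 / ‖a‖ ^ 2 →
      ρ τ = τ * ⟪a, g⟫ / (1 - τ * ‖a‖ ^ 2)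
        + τ ^ 2 * ⟪a, Matrix.toEuclideanLin B a⟫ / (2 * (1 - τ * ‖a‖ ^ 2) ^ 2))
    (aτ τm : ℝ)
    (haτ : aτ = ⟪a, Matrix.toEuclideanLin B a⟫ - ‖a‖ ^ 2 * ⟪a, g⟫)
    (hτm : τm = 1 / ‖a‖ ^ 2)
    (τcp : ℝ) (hτcp : aτ ≠ 0 → τcp = -⟪a, g⟫ / aτ)
    (Δ ε₀ : ℝ) (hΔ : 0 < Δ) (hε₀ : 0 < ε₀) (hε₁ : ε₀ < 1)
    (τΔ τd τu : ℝ) (hτΔ : τΔ = Δ / ‖a‖) (hτd : τd = (1 - ε₀) / ‖a‖ ^ 2)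
    (hτu : τu = (1 + ε₀) / ‖a‖ ^ 2)
    (hag : ⟪a, g⟫ ≠ 0) (hcase : |1 - Δ * ‖a‖| < ε₀)
    (τstar : ℝ)
    (hτs1 : aτ ≤ 0 → τstar = -τΔ)
    (hτs2 : 0 < aτ → 0 < ⟪a, g⟫ → τstar = max (-τΔ) τcp)
    (hτs3 : 0 < aτ → ⟪a, g⟫ < 0 → τstar = min τcp τd) :
    τstar ∈ Set.Icc (-τΔ) τd ∧ ∀ τ ∈ Set.Icc (-τΔ) τd, ρ τstar ≤ ρ τ := by
  set s := ‖a‖ ^ 2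
  set p := ⟪a, g⟫
  set b := ⟪a, Matrix.toEuclideanLin B a⟫
  have hs : 0 < s := by positivity
  have hb : 0 < b := hBpd.inner_toEuclideanLin_self_pos ha
  have hτΔ_pos : 0 < τΔ := by rw [hτΔ]; positivity
  have hτd_pos : 0 < τd := by rw [hτd]; exact div_pos (by linarith) hs
  have hτd_lt : τd < 1 / s := by rw [hτd]; gcongr; linarith
  have hlr : -τΔ ≤ τd := by linarith
  have hρ_eq : ∀ τ ∈ Icc (-τΔ) τd, ρ τ = (quadModel p b ∘ rescale s) τ := fun τ hτ => by
    rw [hρ τ (hτ.2.trans_lt hτd_lt).ne, Function.comp_apply, quadModel_rescale]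
  suffices h : τstar ∈ Icc (-τΔ) τd ∧ IsMinOn (quadModel p b ∘ rescale s) (Icc (-τΔ) τd) τstar by
    refine ⟨h.1, fun τ hτ => ?_⟩
    rw [hρ_eq τstar h.1, hρ_eq τ hτ]
    exact h.2 hτ
  rcases le_or_gt aτ 0 with hc | hc
  · rw [hτs1 hc]
    exact ⟨left_mem_Icc.2 hlr, isMinOn_quadModel_rescale_left hs hb
      (neg_div_lt_rescale hs hb (by linarith) (by linarith)).le hlr hτd_lt⟩
  have hb_eq : b = aτ + s * p := by linarith
  have hcp : rescale s τcp = -p / b := by rw [hτcp hc.ne', hb_eq, rescale_neg_div hc.ne']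
  rcases hag.lt_or_gt with hp | hp
  · have hcp_pos : 0 < τcp := by rw [hτcp hc.ne']; exact div_pos (by linarith) hc
    have hcp_lt : τcp < 1 / s := by rw [hτcp hc.ne']; exact neg_div_lt_one_div hs hc (hb_eq ▸ hb)
    rw [hτs3 hc hp]
    exact ⟨⟨le_min (by linarith) hlr, min_le_right _ _⟩,
      isMinOn_quadModel_rescale_min hs hb hcp hcp_lt hlr hτd_lt⟩
  · have hcp_neg : τcp < 0 := by rw [hτcp hc.ne']; exact div_neg_of_neg_of_pos (by linarith) hc
    rw [hτs2 hc hp]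
    exact ⟨⟨le_max_left _ _, max_le hlr (by linarith)⟩,
      isMinOn_quadModel_rescale_max hs hb hcp hlr hτd_lt⟩
end

section
/- If aᵀg > 0 and −Δ·a_τ + ‖a‖·(aᵀg) ≥ 0, then −ρ(−τ_Δ) ≥ Δ·(aᵀg)/(2‖a‖·(1 + Δ‖a‖)); in particular −ρ(−τ_Δ) > 0. -/
open scoped RealInnerProductSpace

/-- `ρ` in the scalars `s = ‖a‖`, `c = aᵀg`, `q = aᵀBa`. -/
noncomputable def rhoModel (s c q τ : ℝ) : ℝ :=
  τ * c / (1 - τ * s ^ 2) + τ ^ 2 * q / (2 * (1 - τ * s ^ 2) ^ 2)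

lemma neg_rhoModel_neg_div_eq {s c q Δ : ℝ} (hs : s ≠ 0) (hΔs : 1 + Δ * s ≠ 0) :
    -rhoModel s c q (-(Δ / s)) =
      Δ * c / (2 * s * (1 + Δ * s))
        + Δ * (-Δ * (q - s ^ 2 * c) + s * c) / (2 * s ^ 2 * (1 + Δ * s) ^ 2) := by
  have hden : 1 - -(Δ / s) * s ^ 2 = 1 + Δ * s := by field_simp; ring
  rw [rhoModel, hden]
  field_simp
  ring

lemma le_neg_rhoModel_neg_div {s c q Δ : ℝ} (hs : 0 < s) (hΔ : 0 ≤ Δ)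
    (hcond : 0 ≤ -Δ * (q - s ^ 2 * c) + s * c) :
    Δ * c / (2 * s * (1 + Δ * s)) ≤ -rhoModel s c q (-(Δ / s)) := by
  rw [neg_rhoModel_neg_div_eq hs.ne' (by positivity)]
  have hexcess : 0 ≤ Δ * (-Δ * (q - s ^ 2 * c) + s * c) / (2 * s ^ 2 * (1 + Δ * s) ^ 2) :=
    div_nonneg (mul_nonneg hΔ hcond) (by positivity)
  linarith

theorem stmt_15 {{n : ℕ}} (hn : 1 ≤ n)
    (a g : EuclideanSpace ℝ (Fin n)) (ha : a ≠ 0)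
    (B : Matrix (Fin n) (Fin n) ℝ) (hBs : B.IsSymm) (hBpd : B.PosDef)
    (ρ : ℝ → ℝ)
    (hρ : ∀ τ : ℝ, τ ≠ 1 / ‖a‖ ^ 2 →
      ρ τ = τ * ⟪a, g⟫ / (1 - τ * ‖a‖ ^ 2)
        + τ ^ 2 * ⟪a, Matrix.toEuclideanLin B a⟫ / (2 * (1 - τ * ‖a‖ ^ 2) ^ 2))
    (aτ τm : ℝ)
    (haτ : aτ = ⟪a, Matrix.toEuclideanLin B a⟫ - ‖a‖ ^ 2 * ⟪a, g⟫)
    (hτm : τm = 1 / ‖a‖ ^ 2)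
    (Δ : ℝ) (hΔ : 0 < Δ) (τΔ : ℝ) (hτΔ : τΔ = Δ / ‖a‖)
    (hag : 0 < ⟪a, g⟫) (hcond : 0 ≤ -Δ * aτ + ‖a‖ * ⟪a, g⟫) :
    -ρ (-τΔ) ≥ Δ * ⟪a, g⟫ / (2 * ‖a‖ * (1 + Δ * ‖a‖)) ∧ 0 < -ρ (-τΔ) := by
  have hs : 0 < ‖a‖ := norm_pos_iff.mpr ha
  have hρΔ : ρ (-τΔ) = rhoModel ‖a‖ ⟪a, g⟫ ⟪a, Matrix.toEuclideanLin B a⟫ (-(Δ / ‖a‖)) := by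
    subst hτΔ
    refine hρ _ (ne_of_lt ?_)
    have : 0 < Δ / ‖a‖ := by positivity
    have : 0 < 1 / ‖a‖ ^ 2 := by positivity
    linarith
  have hbound := le_neg_rhoModel_neg_div (q := ⟪a, Matrix.toEuclideanLin B a⟫) hs hΔ.le
    (haτ ▸ hcond)
  rw [hρΔ]
  exact ⟨hbound, lt_of_lt_of_le (by positivity) hbound⟩
end
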